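/- Let t ≥ 2, let n ≥ t, and let c = (c_i)_{i≥1} be a cost vector of nonnegative reals such that c_{i+1} - c_i ≤ c_t for every i ≥ t. Then for every complete multipartite graph H on n vertices, θ*_t(H, c) ≤ θ*_t(T_{n,t}, c), and moreover θ*_t(T_{n,t}, c) = θ_t(T_{n,t}, c). -/

import Mathlib

/-!
The Turán graph `T_{n,t}` is `K_{t+1}`-free, so each of its `t`-cliques lies in no other clique and
must be covered by itself: both cover numbers equal `c_t` times the number of `t`-cliques, which is
the product of the part sizes, `balancedProd n t`.

For a complete multipartite graph with parts of sizes `m_0 ≥ m_1 ≥ ⋯ ≥ m_{k-1}` and `k ≥ t`, spread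
the weight `m_0 ⋯ m_{t-2} (m_j - m_{j+1})` uniformly over the transversals of the first `j + 1`
parts, for `t - 1 ≤ j < k`. By telescoping, a `t`-clique whose last part is the `a`-th receives
`m_0 ⋯ m_{t-2} m_a / ∏ (sizes of its parts) ≥ 1`. Since `c_{j+1} ≤ (j - t + 2) c_t`, Abel summation
bounds the cost by `c_t · m_0 ⋯ m_{t-2} (m_{t-1} + ⋯ + m_{k-1})`, that is `c_t` times a product of
`t` numbers summing to `n`, and smoothing bounds such a product by `balancedProd n t`.
-/

open scoped Classical
open Finset

/-- `K` is a clique of `G`: a nonempty set of pairwise adjacent vertices. -/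
def IsCliqueOf {V : Type} [Fintype V] [DecidableEq V] (G : SimpleGraph V) (K : Finset V) : Prop :=
  K.Nonempty ∧ G.IsClique (K : Set V)

/-- Total `c`-cost of a weighting `f` of the finsets of vertices. -/
noncomputable def cliqueCost {V : Type} [Fintype V] [DecidableEq V]
    (c : ℕ → ℝ) (f : Finset V → ℝ) : ℝ :=
  ∑ K : Finset V, c K.card * f K

/-- `f` is a fractional `t`-clique cover of `G`. -/
def IsFracCover {V : Type} [Fintype V] [DecidableEq V]
    (t : ℕ) (G : SimpleGraph V) (f : Finset V → ℝ) : Prop :=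
  (∀ K, 0 ≤ f K) ∧ (∀ K, ¬ IsCliqueOf G K → f K = 0) ∧
  ∀ T : Finset V, T.card = t → G.IsClique (T : Set V) →
    1 ≤ ∑ K ∈ Finset.univ.filter (fun K => T ⊆ K), f K

/-- `f` is a fractional `t`-clique decomposition of `G`. -/
def IsFracDecomp {V : Type} [Fintype V] [DecidableEq V]
    (t : ℕ) (G : SimpleGraph V) (f : Finset V → ℝ) : Prop :=
  (∀ K, 0 ≤ f K) ∧ (∀ K, ¬ IsCliqueOf G K → f K = 0) ∧
  ∀ T : Finset V, T.card = t → G.IsClique (T : Set V) →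
    ∑ K ∈ Finset.univ.filter (fun K => T ⊆ K), f K = 1

/-- `f` is an integer (`{0,1}`-valued) `t`-clique cover of `G`. -/
def IsIntCover {V : Type} [Fintype V] [DecidableEq V]
    (t : ℕ) (G : SimpleGraph V) (f : Finset V → ℝ) : Prop :=
  IsFracCover t G f ∧ ∀ K, f K = 0 ∨ f K = 1

/-- `f` is an integer (`{0,1}`-valued) `t`-clique decomposition of `G`. -/
def IsIntDecomp {V : Type} [Fintype V] [DecidableEq V]
    (t : ℕ) (G : SimpleGraph V) (f : Finset V → ℝ) : Prop :=
  IsFracDecomp t G f ∧ ∀ K, f K = 0 ∨ f K = 1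

/-- θ*_t(G,c): minimum total c-cost of a fractional t-clique cover. -/
noncomputable def thetaFrac {V : Type} [Fintype V] [DecidableEq V]
    (t : ℕ) (G : SimpleGraph V) (c : ℕ → ℝ) : ℝ :=
  sInf { x | ∃ f, IsFracCover t G f ∧ x = cliqueCost c f }

/-- θ_t(G,c): minimum total c-cost of an integer t-clique cover. -/
noncomputable def thetaInt {V : Type} [Fintype V] [DecidableEq V]
    (t : ℕ) (G : SimpleGraph V) (c : ℕ → ℝ) : ℝ :=
  sInf { x | ∃ f, IsIntCover t G f ∧ x = cliqueCost c f }

/-- π*_t(G,c): minimum total c-cost of a fractional t-clique decomposition. -/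
noncomputable def piFrac {V : Type} [Fintype V] [DecidableEq V]
    (t : ℕ) (G : SimpleGraph V) (c : ℕ → ℝ) : ℝ :=
  sInf { x | ∃ f, IsFracDecomp t G f ∧ x = cliqueCost c f }

/-- π_t(G,c): minimum total c-cost of an integer t-clique decomposition. -/
noncomputable def piInt {V : Type} [Fintype V] [DecidableEq V]
    (t : ℕ) (G : SimpleGraph V) (c : ℕ → ℝ) : ℝ :=
  sInf { x | ∃ f, IsIntDecomp t G f ∧ x = cliqueCost c f }

/-- `G` is complete multipartite: vertices can be assigned to parts so that
adjacency holds exactly between distinct parts. -/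
def IsCompleteMultipartite {V : Type} [Fintype V] [DecidableEq V]
    (G : SimpleGraph V) : Prop :=
  ∃ p : V → ℕ, ∀ u v, G.Adj u v ↔ p u ≠ p v

section Transversals

variable {V α : Type*} [Fintype V] [DecidableEq α]

def fiberCard (p : V → α) (a : α) : ℕ := #{v | p v = a}

def transversals (p : V → α) (D : Finset α) : Finset (Finset V) :=
  {K | Set.InjOn p K ∧ K.image p = D}

variable {p : V → α} {D : Finset α} {K T : Finset V}

lemma mem_transversals : K ∈ transversals p D ↔ Set.InjOn p K ∧ K.image p = D := by
  simp [transversals]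

lemma card_transversals [DecidableEq V] (p : V → α) (D : Finset α) :
    #(transversals p D) = ∏ a ∈ D, fiberCard p a := by
  simp only [fiberCard]
  rw [← card_pi]
  symm
  refine card_bij (fun g _ => D.attach.image fun a => g a.1 a.2) ?_ ?_ ?_
  · intro g hg
    have hpg : ∀ a (ha : a ∈ D), p (g a ha) = a := fun a ha => by
      simpa using mem_pi.1 hg a ha
    refine mem_transversals.2 ⟨?_, ?_⟩
    · simp only [coe_image, Set.InjOn, Set.mem_image, mem_coe, mem_attach, true_and]
      rintro _ ⟨⟨a, ha⟩, rfl⟩ _ ⟨⟨b, hb⟩, rfl⟩ hab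
      rw [hpg, hpg] at hab
      subst hab
      rfl
    · ext a
      simp [hpg]
  · intro g hg g' hg' hgg'
    funext a ha
    have hpg : ∀ g ∈ D.pi fun a => ({v | p v = a} : Finset V), ∀ a (ha : a ∈ D), p (g a ha) = a :=
      fun g hg a ha => by simpa using mem_pi.1 hg a ha
    obtain ⟨⟨b, hb⟩, -, hgb⟩ := mem_image.1 (hgg' ▸ mem_image_of_mem _ (mem_attach _ ⟨a, ha⟩) :
      g a ha ∈ D.attach.image fun a => g' a.1 a.2)
    obtain rfl : b = a := by rw [← hpg g' hg' b hb, hgb, hpg g hg a ha]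
    exact hgb.symm
  · intro K hK
    obtain ⟨hinj, himage⟩ := mem_transversals.1 hK
    have hchoice : ∀ a ∈ D, ∃ v ∈ K, p v = a := fun a ha => by
      simpa [← himage] using ha
    choose g hgK hpg using hchoice
    refine ⟨g, mem_pi.2 fun a ha => by simpa using hpg a ha, ?_⟩
    ext v
    simp only [mem_image, mem_attach, true_and, Subtype.exists]
    constructor
    · rintro ⟨a, ha, rfl⟩
      exact hgK a ha
    · intro hv
      have hpv : p v ∈ D := himage ▸ mem_image_of_mem p hv
      exact ⟨p v, hpv, hinj (hgK _ hpv) hv (hpg _ hpv)⟩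

lemma card_filter_superset_transversals [DecidableEq V] (hT : Set.InjOn p T)
    (hTD : T.image p ⊆ D) :
    #{K ∈ transversals p D | T ⊆ K} = #(transversals p (D \ T.image p)) := by
  have hcross : ∀ J ∈ transversals p (D \ T.image p), ∀ x ∈ J, ∀ y ∈ T, p x ≠ p y := by
    intro J hJ x hx y hy hxy
    have : p x ∈ D \ T.image p := (mem_transversals.1 hJ).2 ▸ mem_image_of_mem p hx
    exact (mem_sdiff.1 this).2 (hxy ▸ mem_image_of_mem p hy)
  have hdisj : ∀ J ∈ transversals p (D \ T.image p), Disjoint J T := fun J hJ =>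
    disjoint_left.2 fun x hx hxT => hcross J hJ x hx x hxT rfl
  refine card_bij' (fun K _ => K \ T) (fun J _ => J ∪ T) ?_ ?_ ?_ ?_
  · intro K hK
    obtain ⟨hKD, hTK⟩ := mem_filter.1 hK
    obtain ⟨hinj, himage⟩ := mem_transversals.1 hKD
    exact mem_transversals.2 ⟨hinj.mono sdiff_subset, by rw [image_sdiff_of_injOn hinj hTK, himage]⟩
  · intro J hJ
    obtain ⟨hinj, himage⟩ := mem_transversals.1 hJ
    refine mem_filter.2 ⟨mem_transversals.2 ⟨?_, ?_⟩, subset_union_right⟩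
    · rw [coe_union, Set.injOn_union (disjoint_coe.2 (hdisj J hJ))]
      exact ⟨hinj, hT, hcross J hJ⟩
    · rw [image_union, himage, sdiff_union_of_subset hTD]
  · intro K hK
    exact sdiff_union_of_subset (mem_filter.1 hK).2
  · intro J hJ
    exact union_sdiff_cancel_right (hdisj J hJ)

lemma card_eq_of_mem_transversals (hK : K ∈ transversals p D) : #K = #D := by
  obtain ⟨hinj, himage⟩ := mem_transversals.1 hK
  rw [← himage, card_image_of_injOn hinj]

end Transversals

section Cliques

variable {V α : Type*} {G : SimpleGraph V} {p : V → α}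

lemma isClique_iff_injOn (hG : ∀ u v, G.Adj u v ↔ p u ≠ p v) {s : Set V} :
    G.IsClique s ↔ s.InjOn p := by
  constructor
  · intro h x hx y hy hxy
    by_contra hne
    exact (hG x y).1 (h hx hy hne) hxy
  · intro h x hx y hy hne
    exact (hG x y).2 fun hxy => hne (h hx hy hxy)

lemma card_le_of_isClique [DecidableEq α] (hG : ∀ u v, G.Adj u v ↔ p u ≠ p v) {K : Finset V}
    {D : Finset α} (hK : G.IsClique (K : Set V)) (hKD : ∀ v ∈ K, p v ∈ D) : #K ≤ #D := by
  rw [← card_image_of_injOn ((isClique_iff_injOn hG).1 hK)]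
  exact card_le_card fun a ha => by
    obtain ⟨v, hv, rfl⟩ := mem_image.1 ha
    exact hKD v hv

lemma card_le_of_isClique_of_cliqueFree {t : ℕ} (hG : G.CliqueFree (t + 1)) {K : Finset V}
    (hK : G.IsClique (K : Set V)) : #K ≤ t := by
  by_contra! h
  obtain ⟨L, hLK, hL⟩ := exists_subset_card_eq (show t + 1 ≤ #K from h)
  exact hG L ⟨hK.subset (coe_subset.2 hLK), hL⟩

lemma cliqueFree_of_forall_mem [DecidableEq α] (hG : ∀ u v, G.Adj u v ↔ p u ≠ p v)
    {D : Finset α} (hD : ∀ v, p v ∈ D) :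
    G.CliqueFree (#D + 1) := by
  intro K hK
  have := card_le_of_isClique hG hK.isClique fun v _ => hD v
  rw [hK.card_eq] at this
  omega

end Cliques

section UniformTransversal

variable {V : Type} [Fintype V] [DecidableEq V] {α : Type*} [DecidableEq α]
  {p : V → α} {D : Finset α} {K T : Finset V}

lemma isCliqueOf_of_mem_transversals {G : SimpleGraph V} (hG : ∀ u v, G.Adj u v ↔ p u ≠ p v)
    (hD : D.Nonempty) (hK : K ∈ transversals p D) : IsCliqueOf G K := by
  obtain ⟨hinj, himage⟩ := mem_transversals.1 hK
  exact ⟨by simpa [← himage] using hD, (isClique_iff_injOn hG).2 hinj⟩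

noncomputable def uniformTransversal (p : V → α) (D : Finset α) (K : Finset V) : ℝ :=
  if K ∈ transversals p D then (#(transversals p D) : ℝ)⁻¹ else 0

lemma uniformTransversal_nonneg : 0 ≤ uniformTransversal p D K := by
  unfold uniformTransversal
  split_ifs <;> positivity

lemma cliqueCost_uniformTransversal (c : ℕ → ℝ) (hD : (transversals p D).Nonempty) :
    cliqueCost c (uniformTransversal p D) = c #D := by
  simp only [cliqueCost, uniformTransversal, mul_ite, mul_zero]
  rw [sum_ite_mem, univ_inter, sum_congr rfl fun K hK => by rw [card_eq_of_mem_transversals hK],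
    sum_const, nsmul_eq_mul]
  have : (#(transversals p D) : ℝ) ≠ 0 := by exact_mod_cast hD.card_pos.ne'
  field_simp

lemma sum_superset_uniformTransversal (hT : Set.InjOn p T) (hD : ∀ a ∈ D, 0 < fiberCard p a) :
    ∑ K ∈ univ.filter (fun K => T ⊆ K), uniformTransversal p D K =
      if T.image p ⊆ D then (∏ a ∈ T.image p, (fiberCard p a : ℝ))⁻¹ else 0 := by
  simp only [uniformTransversal]
  rw [sum_ite_mem, sum_const, nsmul_eq_mul, filter_inter, univ_inter]
  split_ifs with hTD
  · rw [card_filter_superset_transversals hT hTD, card_transversals, card_transversals,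
      ← prod_sdiff hTD]
    have : ∀ a ∈ D, (fiberCard p a : ℝ) ≠ 0 := fun a ha => by exact_mod_cast (hD a ha).ne'
    push_cast
    rw [mul_inv, ← mul_assoc,
      mul_inv_cancel₀ (prod_ne_zero_iff.2 fun a ha => this a (mem_sdiff.1 ha).1), one_mul]
  · rw [filter_false_of_mem, card_empty, Nat.cast_zero, zero_mul]
    intro K hK hTK
    exact hTD ((mem_transversals.1 hK).2 ▸ image_subset_image hTK)

end UniformTransversal

section Covers

open SimpleGraph (mem_cliqueFinset_iff)

variable {V : Type} [Fintype V] [DecidableEq V] {t : ℕ} {G : SimpleGraph V} {c : ℕ → ℝ}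
  {f : Finset V → ℝ}

lemma IsFracCover.cost_term_nonneg (hf : IsFracCover t G f) (hc : ∀ i, 1 ≤ i → 0 ≤ c i)
    (K : Finset V) : 0 ≤ c #K * f K := by
  by_cases hK : IsCliqueOf G K
  · exact mul_nonneg (hc _ hK.1.card_pos) (hf.1 K)
  · rw [hf.2.1 K hK, mul_zero]

lemma IsFracCover.cliqueCost_nonneg (hf : IsFracCover t G f) (hc : ∀ i, 1 ≤ i → 0 ≤ c i) :
    0 ≤ cliqueCost c f :=
  sum_nonneg fun K _ => hf.cost_term_nonneg hc K

lemma thetaFrac_le_cliqueCost (hc : ∀ i, 1 ≤ i → 0 ≤ c i) (hf : IsFracCover t G f) :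
    thetaFrac t G c ≤ cliqueCost c f :=
  csInf_le ⟨0, by rintro x ⟨g, hg, rfl⟩; exact hg.cliqueCost_nonneg hc⟩ ⟨f, hf, rfl⟩

lemma IsFracCover.one_le_of_cliqueFree (hf : IsFracCover t G f) (hG : G.CliqueFree (t + 1))
    {T : Finset V} (hT : G.IsNClique t T) : 1 ≤ f T := by
  have hcover := hf.2.2 T hT.card_eq hT.isClique
  rwa [sum_eq_single_of_mem T (mem_filter.2 ⟨mem_univ T, subset_rfl⟩)] at hcover
  intro K hK hKT
  by_contra hfK
  have hKclique : IsCliqueOf G K := by_contra fun h => hfK (hf.2.1 K h)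
  have := card_le_of_isClique_of_cliqueFree hG hKclique.2
  exact hKT (eq_of_subset_of_card_le (mem_filter.1 hK).2 (hT.card_eq ▸ this)).symm

variable [DecidableRel G.Adj]

lemma le_cliqueCost_of_cliqueFree (ht : 0 < t) (hc : ∀ i, 1 ≤ i → 0 ≤ c i)
    (hG : G.CliqueFree (t + 1)) (hf : IsFracCover t G f) :
    c t * #(G.cliqueFinset t) ≤ cliqueCost c f := by
  calc c t * #(G.cliqueFinset t) = ∑ T ∈ G.cliqueFinset t, c #T * 1 := by
        rw [sum_congr rfl fun T hT => by rw [(mem_cliqueFinset_iff.1 hT).card_eq, mul_one],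
          sum_const, nsmul_eq_mul, mul_comm]
    _ ≤ ∑ T ∈ G.cliqueFinset t, c #T * f T := by
        refine sum_le_sum fun T hT => ?_
        have hT := mem_cliqueFinset_iff.1 hT
        exact mul_le_mul_of_nonneg_left (hf.one_le_of_cliqueFree hG hT)
          (hc _ (hT.card_eq ▸ ht))
    _ ≤ cliqueCost c f :=
        sum_le_sum_of_subset_of_nonneg (subset_univ _) fun K _ _ => hf.cost_term_nonneg hc K

lemma isIntCover_indicator_cliqueFinset (ht : 0 < t) :
    IsIntCover t G fun K => if K ∈ G.cliqueFinset t then 1 else 0 := by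
  refine ⟨⟨fun K => by dsimp only; split_ifs <;> norm_num, fun K hK => if_neg fun hmem => hK ?_,
    fun T hTcard hT => ?_⟩, fun K => by dsimp only; split_ifs <;> simp⟩
  · have hK := mem_cliqueFinset_iff.1 hmem
    exact ⟨card_pos.1 (hK.card_eq ▸ ht), hK.isClique⟩
  · refine le_trans (le_of_eq ?_) (single_le_sum (fun K _ => ?_)
      (mem_filter.2 ⟨mem_univ T, subset_rfl⟩))
    · rw [if_pos (mem_cliqueFinset_iff.2 ⟨hT, hTcard⟩)]
    · split_ifs <;> norm_num

lemma cliqueCost_indicator_cliqueFinset :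
    cliqueCost c (fun K => if K ∈ G.cliqueFinset t then 1 else 0) = c t * #(G.cliqueFinset t) := by
  simp only [cliqueCost, mul_ite, mul_one, mul_zero]
  rw [sum_ite_mem, univ_inter, sum_congr rfl fun T hT => by
    rw [(mem_cliqueFinset_iff.1 hT).card_eq], sum_const, nsmul_eq_mul, mul_comm]

theorem thetaFrac_eq_of_cliqueFree (ht : 0 < t) (hc : ∀ i, 1 ≤ i → 0 ≤ c i)
    (hG : G.CliqueFree (t + 1)) : thetaFrac t G c = c t * #(G.cliqueFinset t) :=
  IsLeast.csInf_eq ⟨⟨_, (isIntCover_indicator_cliqueFinset ht).1,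
    cliqueCost_indicator_cliqueFinset.symm⟩,
    by rintro x ⟨f, hf, rfl⟩; exact le_cliqueCost_of_cliqueFree ht hc hG hf⟩

theorem thetaInt_eq_of_cliqueFree (ht : 0 < t) (hc : ∀ i, 1 ≤ i → 0 ≤ c i)
    (hG : G.CliqueFree (t + 1)) : thetaInt t G c = c t * #(G.cliqueFinset t) :=
  IsLeast.csInf_eq ⟨⟨_, isIntCover_indicator_cliqueFinset ht,
    cliqueCost_indicator_cliqueFinset.symm⟩,
    by rintro x ⟨f, hf, rfl⟩; exact le_cliqueCost_of_cliqueFree ht hc hG hf.1⟩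

end Covers

def balancedProd (n t : ℕ) : ℕ := (n / t + 1) ^ (n % t) * (n / t) ^ (t - n % t)

section BalancedProd

variable {ι : Type*} [Fintype ι]

lemma prod_eq_balancedProd_of_balanced (b : ι → ℕ) (hb : ∀ i j, b i ≤ b j + 1) :
    ∏ i, b i = balancedProd (∑ i, b i) (Fintype.card ι) := by
  cases isEmpty_or_nonempty ι
  · simp [balancedProd]
  obtain ⟨i₀, hi₀⟩ := Finite.exists_min b
  set A : Finset ι := {i | b i = b i₀ + 1}
  have hb_eq : ∀ i, b i = if i ∈ A then b i₀ + 1 else b i₀ := fun i => by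
    have := hb i i₀
    have := hi₀ i
    split_ifs with h <;> simp [A] at h <;> omega
  have hA : #A < Fintype.card ι := card_lt_univ_of_notMem (x := i₀) (by simp [A])
  have hcompl : ({i | i ∉ A} : Finset ι) = Aᶜ := by ext; simp
  have hsum : ∑ i, b i = #A + Fintype.card ι * b i₀ := by
    rw [sum_congr rfl fun i _ => hb_eq i, sum_ite, sum_const, sum_const, filter_univ_mem, hcompl,
      card_compl, smul_eq_mul, smul_eq_mul]
    zify [hA.le]
    ring
  have hdiv := (Nat.div_mod_unique Fintype.card_pos).2 ⟨hsum.symm, hA⟩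
  rw [balancedProd, hdiv.1, hdiv.2, prod_congr rfl fun i _ => hb_eq i, prod_ite, prod_const,
    prod_const, filter_univ_mem, hcompl, card_compl]

lemma exists_smoothing {b : ι → ℕ} {i j : ι} (hij : b j + 1 < b i) :
    ∃ b' : ι → ℕ, ∑ x, b' x = ∑ x, b x ∧ ∑ x, b' x ^ 2 < ∑ x, b x ^ 2 ∧
      ∏ x, b x ≤ ∏ x, b' x := by
  classical
  have hne : i ≠ j := by rintro rfl; omega
  set b' := Function.update (Function.update b i (b i - 1)) j (b j + 1)
  have hi : b' i = b i - 1 := by simp [b', hne]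
  have hj : b' j = b j + 1 := by simp [b']
  have hrest : ∀ x ∈ ({i, j} : Finset ι)ᶜ, (b' x) = b x := fun x hx => by
    simp only [mem_compl, mem_insert, mem_singleton, not_or] at hx
    simp [b', hx.1, hx.2]
  have hsplit_sum : ∀ g : ι → ℕ, ∑ x, g x = g i + g j + ({i, j}ᶜ : Finset ι).sum g := fun g => by
    rw [← sum_add_sum_compl {i, j} g, sum_pair hne]
  have hsplit_prod : ∀ g : ι → ℕ, ∏ x, g x = g i * g j * ({i, j}ᶜ : Finset ι).prod g := fun g => by
    rw [← prod_mul_prod_compl {i, j} g, prod_pair hne]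
  obtain ⟨d, hd⟩ : ∃ d, b i = b j + 2 + d := ⟨b i - (b j + 2), by omega⟩
  refine ⟨b', ?_, ?_, ?_⟩
  · rw [hsplit_sum b', hsplit_sum b, sum_congr rfl hrest, hi, hj]
    omega
  · rw [hsplit_sum (b' · ^ 2), hsplit_sum (b · ^ 2),
      sum_congr rfl fun x hx => by rw [hrest x hx], hi, hj, hd,
      show b j + 2 + d - 1 = b j + 1 + d by omega]
    nlinarith
  · rw [hsplit_prod b', hsplit_prod b, prod_congr rfl hrest, hi, hj, hd,
      show b j + 2 + d - 1 = b j + 1 + d by omega]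
    exact Nat.mul_le_mul_right _ (by nlinarith)

theorem prod_le_balancedProd (b : ι → ℕ) :
    ∏ i, b i ≤ balancedProd (∑ i, b i) (Fintype.card ι) := by
  induction h : ∑ i, b i ^ 2 using Nat.strong_induction_on generalizing b with
  | _ μ ih =>
    by_cases hb : ∀ i j, b i ≤ b j + 1
    · exact (prod_eq_balancedProd_of_balanced b hb).le
    push Not at hb
    obtain ⟨i, j, hij⟩ := hb
    obtain ⟨b', hsum, hsq, hprod⟩ := exists_smoothing hij
    exact hprod.trans (hsum ▸ ih _ (h ▸ hsq) b' rfl)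

end BalancedProd

lemma prod_range_mul_sum_Ico_le_balancedProd (m : ℕ → ℕ) {s k : ℕ} (hsk : s ≤ k) :
    (∏ i ∈ range s, m i) * ∑ i ∈ Ico s k, m i ≤ balancedProd (∑ i ∈ range k, m i) (s + 1) := by
  have h := prod_le_balancedProd fun o : Option (Fin s) => o.elim (∑ i ∈ Ico s k, m i) (m ·)
  simp only [Fintype.prod_option, Fintype.sum_option, Fintype.card_option, Fintype.card_fin,
    Option.elim] at h
  rwa [Fin.prod_univ_eq_prod_range m s, Fin.sum_univ_eq_sum_range m s,
    add_comm, sum_range_add_sum_Ico m hsk, mul_comm] at h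

section Turan

open SimpleGraph (turanGraph turanGraph_adj mem_cliqueFinset_iff isNClique_iff)

variable {n t : ℕ}

lemma fiberCard_mod (ht : 0 < t) {r : ℕ} (hr : r < t) :
    fiberCard (fun v : Fin n => (v : ℕ) % t) r = n / t + if r < n % t then 1 else 0 := by
  rw [← Nat.mod_eq_of_lt hr, ← Nat.count_modEq_card n ht r, Nat.count_eq_card_filter_range,
    fiberCard, ← card_map Fin.valEmbedding]
  congr 1
  ext x
  simp only [mem_map, mem_filter, mem_univ, true_and, Fin.valEmbedding_apply, mem_range]
  exact ⟨by rintro ⟨v, hv, rfl⟩; exact ⟨v.2, hv⟩, fun h => ⟨⟨x, h.1⟩, h.2, rfl⟩⟩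

lemma cliqueFinset_turanGraph (ht : 0 < t) :
    (turanGraph n t).cliqueFinset t = transversals (fun v : Fin n => (v : ℕ) % t) (range t) := by
  have hG : ∀ u v, (turanGraph n t).Adj u v ↔ (u : ℕ) % t ≠ (v : ℕ) % t := fun _ _ => turanGraph_adj
  ext K
  rw [mem_cliqueFinset_iff, isNClique_iff, isClique_iff_injOn hG, mem_transversals]
  refine and_congr_right fun hinj => ?_
  rw [← card_image_of_injOn hinj]
  constructor
  · intro hcard
    refine eq_of_subset_of_card_le (fun r hr => ?_) (by rw [hcard, card_range])
    obtain ⟨v, -, rfl⟩ := mem_image.1 hr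
    exact mem_range.2 (Nat.mod_lt _ ht)
  · intro himage
    rw [himage, card_range]

theorem card_cliqueFinset_turanGraph (ht : 0 < t) :
    #((turanGraph n t).cliqueFinset t) = balancedProd n t := by
  have hs : n % t ≤ t := (Nat.mod_lt n ht).le
  have hlow : ∏ r ∈ range (n % t), (n / t + if r < n % t then 1 else 0) =
      (n / t + 1) ^ (n % t) := by
    rw [prod_congr rfl fun r hr => by rw [if_pos (mem_range.1 hr)], prod_const, card_range]
  have hhigh : ∏ r ∈ Ico (n % t) t, (n / t + if r < n % t then 1 else 0) =
      (n / t) ^ (t - n % t) := by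
    rw [prod_congr rfl fun r hr => by rw [if_neg (mem_Ico.1 hr).1.not_gt, add_zero], prod_const,
      Nat.card_Ico]
  rw [cliqueFinset_turanGraph ht, card_transversals,
    prod_congr rfl fun r hr => fiberCard_mod ht (mem_range.1 hr), ← prod_range_mul_prod_Ico _ hs,
    hlow, hhigh, balancedProd]

end Turan

lemma exists_antitone_relabel {V α : Type*} [Fintype V] [DecidableEq α] (p : V → α) :
    ∃ (k : ℕ) (q : V → ℕ), (∀ u v, q u = q v ↔ p u = p v) ∧ (∀ v, q v < k) ∧
      (∀ i < k, 0 < fiberCard q i) ∧ Antitone (fiberCard q) := by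
  set C := univ.image p
  let e : Fin #C ≃ C := C.equivFin.symm
  let size : Fin #C → ℕᵒᵈ := fun i => OrderDual.toDual (fiberCard p (e i : α))
  let σ := Tuple.sort size
  let q : V → ℕ := fun v => (σ.symm (e.symm ⟨p v, mem_image_of_mem p (mem_univ v)⟩) : ℕ)
  have hq : ∀ v (i : Fin #C), q v = i ↔ p v = e (σ i) := by
    intro v i
    rw [Fin.val_inj, Equiv.symm_apply_eq, Equiv.symm_apply_eq, Subtype.ext_iff]
  have hfiber : ∀ i : Fin #C, fiberCard q i = fiberCard p (e (σ i)) := fun i => by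
    simp only [fiberCard, hq]
  have hfiber_ge : ∀ i, #C ≤ i → fiberCard q i = 0 := fun i hi => by
    rw [fiberCard, card_eq_zero, filter_eq_empty_iff]
    exact fun v _ hv => absurd (hv ▸ (σ.symm _).2 : i < #C) (not_lt.2 hi)
  refine ⟨#C, q, fun u v => ?_, fun v => (σ.symm _).2, fun i hi => ?_, fun i j hij => ?_⟩
  · simp only [q, Fin.val_inj, EmbeddingLike.apply_eq_iff_eq, Subtype.mk.injEq]
  · obtain ⟨v, -, hv⟩ := mem_image.1 (e (σ ⟨i, hi⟩)).2
    rw [hfiber ⟨i, hi⟩]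
    exact card_pos.2 ⟨v, mem_filter.2 ⟨mem_univ v, hv⟩⟩
  · by_cases hj : j < #C
    · rw [hfiber ⟨i, hij.trans_lt hj⟩, hfiber ⟨j, hj⟩]
      exact Tuple.monotone_sort size (show (⟨i, hij.trans_lt hj⟩ : Fin #C) ≤ ⟨j, hj⟩ from hij)
    · rw [hfiber_ge j (not_lt.1 hj)]
      exact Nat.zero_le _

lemma prod_le_prod_range_of_antitone {g : ℕ → ℕ} (hg : Antitone g) (J : Finset ℕ) :
    ∏ i ∈ J, g i ≤ ∏ i ∈ range #J, g i := by
  induction J using Finset.induction_on_max with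
  | empty => simp
  | insert a J hlt ih =>
    have haJ : a ∉ J := fun h => lt_irrefl a (hlt a h)
    have hJa : #J ≤ a := by
      simpa using card_le_card (fun x hx => mem_range.2 (hlt x hx) : J ⊆ range a)
    rw [prod_insert haJ, card_insert_of_notMem haJ, prod_range_succ, mul_comm]
    exact Nat.mul_le_mul ih (hg hJa)

lemma sum_Ico_mul_sub_succ (m : ℕ → ℝ) {s k : ℕ} (hsk : s ≤ k) :
    ∑ j ∈ Ico s k, ((j : ℝ) - s + 1) * (m j - m (j + 1)) = ∑ i ∈ Ico s k, m i - (k - s) * m k := by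
  induction k, hsk using Nat.le_induction with
  | base => simp
  | succ k hsk ih =>
    rw [sum_Ico_succ_top hsk, sum_Ico_succ_top hsk, ih]
    push_cast
    ring

lemma cost_le_of_increment_le {c : ℕ → ℝ} {t : ℕ} (hstep : ∀ i, t ≤ i → c (i + 1) - c i ≤ c t)
    {j : ℕ} (hj : t ≤ j) : c j ≤ ((j : ℝ) - t + 1) * c t := by
  induction j, hj using Nat.le_induction with
  | base => simp
  | succ j hj ih =>
    have := hstep j hj
    push_cast
    linarith

section Levels

variable {V : Type*} [Fintype V] {q : V → ℕ} {s k : ℕ}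

lemma fiberCard_eq_zero_of_le (hqk : ∀ v, q v < k) {i : ℕ} (hi : k ≤ i) : fiberCard q i = 0 := by
  rw [fiberCard, card_eq_zero, filter_eq_empty_iff]
  exact fun v _ hv => (hqk v).not_ge (hv ▸ hi)

lemma sum_fiberCard (hqk : ∀ v, q v < k) : ∑ i ∈ range k, fiberCard q i = Fintype.card V :=
  (card_eq_sum_card_fiberwise fun v _ => mem_range.2 (hqk v)).symm

noncomputable def levelWeight (q : V → ℕ) (s j : ℕ) : ℝ :=
  (∏ i ∈ range s, (fiberCard q i : ℝ)) * (fiberCard q j - fiberCard q (j + 1))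

lemma levelWeight_nonneg (hanti : Antitone (fiberCard q)) (j : ℕ) : 0 ≤ levelWeight q s j :=
  mul_nonneg (by positivity) (sub_nonneg.2 (by exact_mod_cast hanti j.le_succ))

lemma sum_levelWeight (hqk : ∀ v, q v < k) {a : ℕ} (hak : a ≤ k) :
    ∑ j ∈ Ico a k, levelWeight q s j = (∏ i ∈ range s, (fiberCard q i : ℝ)) * fiberCard q a := by
  have htel := sum_Ico_sub (fun i => (fiberCard q i : ℝ)) hak
  rw [fiberCard_eq_zero_of_le hqk le_rfl, Nat.cast_zero, zero_sub, sum_sub_distrib] at htel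
  simp only [levelWeight]
  rw [← mul_sum, sum_sub_distrib]
  congr 1
  linarith

end Levels

section NestedCover

variable {V : Type} [Fintype V] [DecidableEq V] {q : V → ℕ} {s k : ℕ}

-- The cover sketched at the top, for `t = s + 1` and colours `0, …, k - 1` listed by decreasing
-- class size.
noncomputable def nestedCover (q : V → ℕ) (s k : ℕ) (K : Finset V) : ℝ :=
  ∑ j ∈ Ico s k, levelWeight q s j * uniformTransversal q (range (j + 1)) K

lemma sum_superset_nestedCover (hpos : ∀ i < k, 0 < fiberCard q i)
    {T : Finset V} (hT : Set.InjOn q T) {a : ℕ} (haT : a ∈ T.image q)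
    (hTa : ∀ x ∈ T.image q, x ≤ a) (hsa : s ≤ a) :
    ∑ K ∈ univ.filter (fun K => T ⊆ K), nestedCover q s k K =
      (∑ j ∈ Ico a k, levelWeight q s j) / ∏ x ∈ T.image q, (fiberCard q x : ℝ) := by
  have hsub : ∀ j, T.image q ⊆ range (j + 1) ↔ a ≤ j := fun j =>
    ⟨fun h => mem_range_succ_iff.1 (h haT), fun h x hx => mem_range_succ_iff.2 ((hTa x hx).trans h)⟩
  simp only [nestedCover]
  rw [sum_comm]
  simp_rw [← mul_sum]
  rw [sum_congr rfl fun j hj => by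
    rw [sum_superset_uniformTransversal hT fun i hi =>
      hpos i ((mem_range_succ_iff.1 hi).trans_lt (mem_Ico.1 hj).2)]]
  simp_rw [hsub, mul_ite, mul_zero]
  rw [← sum_filter, Ico_filter_le, max_eq_right hsa, sum_div]
  simp only [div_eq_mul_inv]

lemma one_le_sum_superset_nestedCover (hqk : ∀ v, q v < k) (hpos : ∀ i < k, 0 < fiberCard q i)
    (hanti : Antitone (fiberCard q)) {T : Finset V} (hT : Set.InjOn q T) (hTcard : #T = s + 1) :
    1 ≤ ∑ K ∈ univ.filter (fun K => T ⊆ K), nestedCover q s k K := by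
  set S := T.image q
  have hScard : #S = s + 1 := by rw [card_image_of_injOn hT, hTcard]
  have hSne : S.Nonempty := card_pos.1 (by omega)
  set a := S.max' hSne
  have haS : a ∈ S := S.max'_mem hSne
  have hak : a < k := by
    obtain ⟨v, -, hv⟩ := mem_image.1 haS
    exact hv ▸ hqk v
  have hsa : s ≤ a := by
    have := card_le_card (t := range (a + 1)) fun x hx => mem_range_succ_iff.2 (S.le_max' x hx)
    rw [card_range, hScard] at this
    omega
  have hP : 0 < ∏ x ∈ S, fiberCard q x :=
    prod_pos fun x hx => hpos x ((S.le_max' x hx).trans_lt hak)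
  have hPle : ∏ x ∈ S, fiberCard q x ≤ (∏ i ∈ range s, fiberCard q i) * fiberCard q a := by
    rw [← mul_prod_erase S _ haS, mul_comm]
    refine Nat.mul_le_mul_right _ ((prod_le_prod_range_of_antitone hanti _).trans_eq ?_)
    rw [card_erase_of_mem haS, hScard, Nat.add_sub_cancel]
  rw [sum_superset_nestedCover hpos hT haS (S.le_max') hsa, sum_levelWeight hqk hak.le,
    le_div_iff₀ (by exact_mod_cast hP), one_mul]
  exact_mod_cast hPle

lemma isFracCover_nestedCover {G : SimpleGraph V} (hG : ∀ u v, G.Adj u v ↔ q u ≠ q v)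
    (hqk : ∀ v, q v < k) (hpos : ∀ i < k, 0 < fiberCard q i) (hanti : Antitone (fiberCard q)) :
    IsFracCover (s + 1) G (nestedCover q s k) := by
  refine ⟨fun K => sum_nonneg fun j _ =>
    mul_nonneg (levelWeight_nonneg hanti j) uniformTransversal_nonneg, fun K hK => ?_,
    fun T hTcard hT => one_le_sum_superset_nestedCover hqk hpos hanti
      ((isClique_iff_injOn hG).1 hT) hTcard⟩
  refine sum_eq_zero fun j _ => ?_
  rw [uniformTransversal, if_neg fun hKj => hK (isCliqueOf_of_mem_transversals hG
    ⟨0, mem_range.2 j.succ_pos⟩ hKj), mul_zero]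

lemma cliqueCost_nestedCover (c : ℕ → ℝ) (hpos : ∀ i < k, 0 < fiberCard q i) :
    cliqueCost c (nestedCover q s k) = ∑ j ∈ Ico s k, levelWeight q s j * c (j + 1) := by
  simp only [cliqueCost, nestedCover, mul_sum]
  rw [sum_comm]
  refine sum_congr rfl fun j hj => ?_
  have hne : (transversals q (range (j + 1))).Nonempty := by
    rw [← card_pos, card_transversals]
    exact prod_pos fun i hi => hpos i ((mem_range_succ_iff.1 hi).trans_lt (mem_Ico.1 hj).2)
  have hcost := cliqueCost_uniformTransversal c hne
  rw [card_range, cliqueCost] at hcost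
  rw [← hcost, mul_sum]
  exact sum_congr rfl fun K _ => by ring

lemma cliqueCost_nestedCover_le {c : ℕ → ℝ} (hqk : ∀ v, q v < k)
    (hpos : ∀ i < k, 0 < fiberCard q i) (hanti : Antitone (fiberCard q))
    (hstep : ∀ i, s + 1 ≤ i → c (i + 1) - c i ≤ c (s + 1)) (hsk : s ≤ k) :
    cliqueCost c (nestedCover q s k) ≤
      c (s + 1) * ((∏ i ∈ range s, fiberCard q i) * ∑ i ∈ Ico s k, fiberCard q i : ℕ) := by
  rw [cliqueCost_nestedCover c hpos]
  calc ∑ j ∈ Ico s k, levelWeight q s j * c (j + 1)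
      ≤ ∑ j ∈ Ico s k, levelWeight q s j * (((j : ℝ) - s + 1) * c (s + 1)) := by
        refine sum_le_sum fun j hj => mul_le_mul_of_nonneg_left ?_ (levelWeight_nonneg hanti j)
        have := cost_le_of_increment_le hstep (Nat.succ_le_succ (mem_Ico.1 hj).1)
        push_cast at this
        linarith
    _ = c (s + 1) * ((∏ i ∈ range s, (fiberCard q i : ℝ)) * ∑ j ∈ Ico s k,
          ((j : ℝ) - s + 1) * (fiberCard q j - fiberCard q (j + 1))) := by
        simp only [levelWeight, mul_sum]
        exact sum_congr rfl fun j _ => by ring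
    _ = _ := by
        rw [sum_Ico_mul_sub_succ _ hsk, fiberCard_eq_zero_of_le hqk le_rfl]
        push_cast
        ring

end NestedCover

theorem thetaFrac_le_of_isCompleteMultipartite {V : Type} [Fintype V] [DecidableEq V]
    {G : SimpleGraph V} (hG : IsCompleteMultipartite G) {t : ℕ} (ht : 0 < t) {c : ℕ → ℝ}
    (hc : ∀ i, 1 ≤ i → 0 ≤ c i) (hstep : ∀ i, t ≤ i → c (i + 1) - c i ≤ c t) :
    thetaFrac t G c ≤ c t * balancedProd (Fintype.card V) t := by
  obtain ⟨p, hp⟩ := hG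
  obtain ⟨k, q, hqp, hqk, hpos, hanti⟩ := exists_antitone_relabel p
  have hGq : ∀ u v, G.Adj u v ↔ q u ≠ q v := fun u v => by rw [hp, Ne, ← hqp]
  obtain ⟨s, rfl⟩ : ∃ s, t = s + 1 := ⟨t - 1, by omega⟩
  rcases lt_or_ge s k with hsk | hks
  · calc thetaFrac (s + 1) G c ≤ cliqueCost c (nestedCover q s k) :=
          thetaFrac_le_cliqueCost hc (isFracCover_nestedCover hGq hqk hpos hanti)
      _ ≤ c (s + 1) * ((∏ i ∈ range s, fiberCard q i) * ∑ i ∈ Ico s k, fiberCard q i : ℕ) :=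
          cliqueCost_nestedCover_le hqk hpos hanti hstep hsk.le
      _ ≤ c (s + 1) * balancedProd (Fintype.card V) (s + 1) := by
          gcongr
          · exact hc _ ht
          · rw [← sum_fiberCard hqk]
            exact prod_range_mul_sum_Ico_le_balancedProd _ hsk.le
  · have hfree : G.CliqueFree (s + 1) :=
      (cliqueFree_of_forall_mem hGq (D := range k) fun v => mem_range.2 (hqk v)).mono
        (by rw [card_range]; omega)
    rw [thetaFrac_eq_of_cliqueFree ht hc (hfree.mono (by omega)),
      SimpleGraph.cliqueFinset_eq_empty_iff.2 hfree, card_empty, Nat.cast_zero, mul_zero]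
    exact mul_nonneg (hc _ ht) (Nat.cast_nonneg _)

theorem stmt4_general (n t : ℕ) (ht : 2 ≤ t) (c : ℕ → ℝ)
    (hc : ∀ i, 1 ≤ i → 0 ≤ c i) (hstep : ∀ i, t ≤ i → c (i + 1) - c i ≤ c t)
    (H : SimpleGraph (Fin n)) (hH : IsCompleteMultipartite H) :
    thetaFrac t H c ≤ thetaFrac t (SimpleGraph.turanGraph n t) c ∧
    thetaFrac t (SimpleGraph.turanGraph n t) c =
      thetaInt t (SimpleGraph.turanGraph n t) c := by
  have ht0 : 0 < t := by omega
  have hfree := SimpleGraph.turanGraph_cliqueFree (n := n) ht0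
  rw [thetaFrac_eq_of_cliqueFree ht0 hc hfree, thetaInt_eq_of_cliqueFree ht0 hc hfree,
    card_cliqueFinset_turanGraph ht0]
  refine ⟨?_, rfl⟩
  simpa using thetaFrac_le_of_isCompleteMultipartite hH ht0 hc hstep

/-- Theorem 1.8 (i): if `c_{i+1} - c_i ≤ c_t` for all `i ≥ t`, then among
complete multipartite graphs the Turán graph maximizes the fractional
`t`-clique cover number, and for the Turán graph the fractional and integer
cover numbers agree. -/
theorem stmt4 (n t : ℕ) (ht : 2 ≤ t) (hn : t ≤ n) (c : ℕ → ℝ)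
    (hc : ∀ i, 1 ≤ i → 0 ≤ c i) (hstep : ∀ i, t ≤ i → c (i + 1) - c i ≤ c t)
    (H : SimpleGraph (Fin n)) (hH : IsCompleteMultipartite H) :
    thetaFrac t H c ≤ thetaFrac t (SimpleGraph.turanGraph n t) c ∧
    thetaFrac t (SimpleGraph.turanGraph n t) c =
      thetaInt t (SimpleGraph.turanGraph n t) c :=
  stmt4_general n t ht c hc hstep H hH
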